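/- Let (X,r) be a square-free solution of finite order. Then the group G = G(X,r) is a Noetherian group: every subgroup of G is finitely generated. -/

import Mathlib

/-- The left action `σ_x(y)`: first component of `r (x, y)`. -/
def sig {X : Type*} (r : X × X → X × X) (x y : X) : X := (r (x, y)).1

/-- The right action `τ_y(x)`: second component of `r (x, y)`. -/
def tau {X : Type*} (r : X × X → X × X) (y x : X) : X := (r (x, y)).2

/-- `r¹² = r × id`. -/
def r12 {X : Type*} (r : X × X → X × X) : X × X × X → X × X × X :=
  fun t => ((r (t.1, t.2.1)).1, (r (t.1, t.2.1)).2, t.2.2)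

/-- `r²³ = id × r`. -/
def r23 {X : Type*} (r : X × X → X × X) : X × X × X → X × X × X :=
  fun t => (t.1, (r (t.2.1, t.2.2)).1, (r (t.2.1, t.2.2)).2)

/-- The braid relation `r¹² ∘ r²³ ∘ r¹² = r²³ ∘ r¹² ∘ r²³`. -/
def IsBraided {X : Type*} (r : X × X → X × X) : Prop :=
  r12 r ∘ r23 r ∘ r12 r = r23 r ∘ r12 r ∘ r23 r

/-- Nondegeneracy: every `σ_x` and every `τ_y` is bijective. -/
def Nondegenerate {X : Type*} (r : X × X → X × X) : Prop :=
  (∀ x, Function.Bijective (sig r x)) ∧ (∀ y, Function.Bijective (tau r y))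

/-- The defining relators of the group `G(X,r)`:
`x · y · (σ_x(y) · τ_y(x))⁻¹` for all `x, y ∈ X`. -/
def ybRels {X : Type*} (r : X × X → X × X) : Set (FreeGroup X) :=
  { w | ∃ x y : X, w = FreeGroup.of x * FreeGroup.of y *
      (FreeGroup.of (sig r x y) * FreeGroup.of (tau r y x))⁻¹ }

/-- The group `G(X,r)` associated with `(X,r)`, presented by generators `X`
and relations `x y = σ_x(y) τ_y(x)`. -/
abbrev YBGroup {X : Type*} (r : X × X → X × X) := PresentedGroup (ybRels r)

/-- The canonical map `ι : X → G(X,r)`. -/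
def ybι {X : Type*} (r : X × X → X × X) : X → YBGroup r := PresentedGroup.of

/-!
Sending `x` to `(eₓ, σₓ)` defines a homomorphism `G(X,r) → ℤ^X ⋊ Sym(X)`: on the `Sym(X)`
component the defining relations hold by the braid relation, on the `ℤ^X` component by
involutivity. It is injective. Nondegeneracy lets one move inverses to the right, so every element
of `G` is a fraction `a b⁻¹` of positive words; and the `ℤ^X` component of a positive word, the
multiset of its letters each twisted by the `σ` of the letters before it, determines its image
in `G`, because any letter of that multiset can be moved to the front of the word. Finally every
subgroup of `ℤ^X ⋊ Sym(X)` is finitely generated, `ℤ^X` being a Noetherian `ℤ`-module and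
`Sym(X)` finite.
-/

theorem Subgroup.FG.map {G Q : Type*} [Group G] [Group Q] {H : Subgroup G} (hH : H.FG)
    (f : G →* Q) : (H.map f).FG := by
  obtain ⟨S, hS, hSfin⟩ := (Subgroup.fg_iff H).1 hH
  exact (Subgroup.fg_iff _).2 ⟨f '' S, by rw [← MonoidHom.map_closure, hS], hSfin.image f⟩

theorem Subgroup.fg_of_fg_inf_ker_of_fg_map {G Q : Type*} [Group G] [Group Q] (f : G →* Q)
    {H : Subgroup G} (hker : (H ⊓ f.ker).FG) (hmap : (H.map f).FG) : H.FG := by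
  obtain ⟨S, hS, hSfin⟩ := (Subgroup.fg_iff _).1 hker
  obtain ⟨T, hTH, hTfin, hT⟩ : ∃ T ⊆ (H : Set G), T.Finite ∧ H.map f = closure (f '' T) := by
    obtain ⟨T', hT', hT'fin⟩ := (Subgroup.fg_iff _).1 hmap
    refine Set.exists_subset_image_finite_and (p := fun T' => H.map f = closure T') |>.1
      ⟨T', ?_, hT'fin, hT'.symm⟩
    rw [← Subgroup.coe_map, ← hT']
    exact subset_closure
  have hSH : S ⊆ H := fun s hs => (hS ▸ subset_closure hs : s ∈ H ⊓ f.ker).1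
  refine (Subgroup.fg_iff _).2
    ⟨S ∪ T, le_antisymm ((closure_le _).2 (Set.union_subset hSH hTH)) ?_, hSfin.union hTfin⟩
  intro h hh
  obtain ⟨k, hk, hfk⟩ : f h ∈ (closure T).map f := by
    rw [MonoidHom.map_closure, ← hT]
    exact mem_map_of_mem f hh
  have hkS : k ∈ closure (S ∪ T) := closure_mono Set.subset_union_right hk
  have hhk : h * k⁻¹ ∈ closure (S ∪ T) := by
    have hmem : h * k⁻¹ ∈ H ⊓ f.ker :=
      ⟨H.mul_mem hh (H.inv_mem ((closure_le H).2 hTH hk)), by simp [hfk]⟩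
    exact closure_mono Set.subset_union_left (hS ▸ hmem)
  simpa using mul_mem hhk hkS

def Group.IsNoetherian (G : Type*) [Group G] : Prop := ∀ H : Subgroup G, H.FG

namespace Group.IsNoetherian

variable {G Q : Type*} [Group G] [Group Q]

theorem of_finite [Finite G] : IsNoetherian G := fun H =>
  (Subgroup.fg_iff H).2 ⟨H, H.closure_eq, Set.toFinite _⟩

theorem of_fg_of_le_ker (f : G →* Q) (hQ : IsNoetherian Q) (hker : ∀ H ≤ f.ker, H.FG) :
    IsNoetherian G := fun _ =>
  Subgroup.fg_of_fg_inf_ker_of_fg_map f (hker _ inf_le_right) (hQ _)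

theorem of_injective (hQ : IsNoetherian Q) {f : G →* Q} (hf : Function.Injective f) :
    IsNoetherian G :=
  of_fg_of_le_ker f hQ fun H hH => by
    rw [(MonoidHom.ker_eq_bot_iff f).2 hf, le_bot_iff] at hH
    exact hH ▸ Subgroup.FG.bot

theorem multiplicative {M : Type*} [AddCommGroup M] [_root_.IsNoetherian ℤ M] :
    IsNoetherian (Multiplicative M) := fun H => by
  rw [Subgroup.fg_iff_add_fg, ← AddSubgroup.toIntSubmodule_toAddSubgroup H.toAddSubgroup,
    ← Submodule.fg_iff_addSubgroup_fg]
  exact ‹_root_.IsNoetherian ℤ M›.noetherian _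

theorem semidirectProduct {N : Type*} [Group N] {φ : Q →* MulAut N} (hN : IsNoetherian N)
    (hQ : IsNoetherian Q) : IsNoetherian (N ⋊[φ] Q) :=
  of_fg_of_le_ker SemidirectProduct.rightHom hQ fun H hH => by
    rw [← SemidirectProduct.range_inl_eq_ker_rightHom] at hH
    rw [← Subgroup.map_comap_eq_self hH]
    exact (hN _).map _

end Group.IsNoetherian

theorem mulAutArrow_apply_perm_apply {A M : Type*} [Monoid M] (σ : Equiv.Perm A) (F : A → M)
    (a : A) : mulAutArrow σ F (σ a) = F a :=
  congrArg F (σ.symm_apply_apply a)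

theorem mulAutArrow_mulSingle {A M : Type*} [DecidableEq A] [Monoid M] (σ : Equiv.Perm A)
    (a : A) (m : M) : mulAutArrow σ (Pi.mulSingle a m) = Pi.mulSingle (σ a) m := by
  ext z
  obtain ⟨w, rfl⟩ := σ.surjective z
  simp only [mulAutArrow_apply_perm_apply, Pi.mulSingle_apply, σ.injective.eq_iff]

section

variable {X : Type*} {r : X × X → X × X}

theorem IsBraided.sig_sig_tau (hbr : IsBraided r) (x y z : X) :
    sig r (sig r x y) (sig r (tau r y x) z) = sig r x (sig r y z) := by
  simpa [r12, r23, sig, tau] using congrArg Prod.fst (congrFun hbr (x, y, z))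

theorem sig_sig_tau_of_involutive (hinv : Function.Involutive r) (x y : X) :
    sig r (sig r x y) (tau r y x) = x :=
  congrArg Prod.fst (hinv (x, y))

noncomputable def Nondegenerate.sigEquiv (hnd : Nondegenerate r) (x : X) : X ≃ X :=
  Equiv.ofBijective (sig r x) (hnd.1 x)

@[simp] theorem Nondegenerate.sigEquiv_apply (hnd : Nondegenerate r) (x y : X) :
    hnd.sigEquiv x y = sig r x y := rfl

namespace YBGroup

theorem ybι_mul_ybι (x y : X) :
    ybι r x * ybι r y = ybι r (sig r x y) * ybι r (tau r y x) := by
  have hrel : PresentedGroup.mk (ybRels r) (FreeGroup.of x * FreeGroup.of y *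
      (FreeGroup.of (sig r x y) * FreeGroup.of (tau r y x))⁻¹) = 1 :=
    (QuotientGroup.eq_one_iff _).2 (Subgroup.subset_normalClosure ⟨x, y, rfl⟩)
  rwa [map_mul, map_mul, map_inv, map_mul, mul_inv_eq_one] at hrel

variable (r) in
def wordProd (a : List X) : YBGroup r := (a.map (ybι r)).prod

@[simp] theorem wordProd_nil : wordProd r [] = 1 := rfl

@[simp] theorem wordProd_cons (x : X) (a : List X) :
    wordProd r (x :: a) = ybι r x * wordProd r a := by
  simp [wordProd]

@[simp] theorem wordProd_append (a b : List X) :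
    wordProd r (a ++ b) = wordProd r a * wordProd r b := by
  simp [wordProd]

theorem exists_inv_ybι_mul_wordProd_eq (hnd : Nondegenerate r) (x : X) (c : List X) :
    ∃ (c' : List X) (x' : X), (ybι r x)⁻¹ * wordProd r c = wordProd r c' * (ybι r x')⁻¹ := by
  induction c generalizing x with
  | nil => exact ⟨[], x, by simp⟩
  | cons z c ih =>
    obtain ⟨y, rfl⟩ := (hnd.1 x).2 z
    obtain ⟨c', x', hc'⟩ := ih (tau r y x)
    refine ⟨y :: c', x', ?_⟩
    have hxy : (ybι r x)⁻¹ * ybι r (sig r x y) = ybι r y * (ybι r (tau r y x))⁻¹ := by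
      rw [inv_mul_eq_iff_eq_mul, ← mul_assoc, ybι_mul_ybι, mul_inv_cancel_right]
    rw [wordProd_cons, ← mul_assoc, hxy, mul_assoc, hc', wordProd_cons, mul_assoc]

theorem exists_inv_wordProd_mul_wordProd_eq (hnd : Nondegenerate r) (b c : List X) :
    ∃ c' b' : List X, (wordProd r b)⁻¹ * wordProd r c = wordProd r c' * (wordProd r b')⁻¹ := by
  induction b generalizing c with
  | nil => exact ⟨c, [], by simp⟩
  | cons x b ih =>
    obtain ⟨c₁, x₁, h₁⟩ := exists_inv_ybι_mul_wordProd_eq hnd x c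
    obtain ⟨c₂, b₂, h₂⟩ := ih c₁
    refine ⟨c₂, x₁ :: b₂, ?_⟩
    rw [wordProd_cons, mul_inv_rev, mul_assoc, h₁, ← mul_assoc, h₂, wordProd_cons, mul_inv_rev,
      mul_assoc]

theorem exists_eq_wordProd_mul_inv (hnd : Nondegenerate r) (g : YBGroup r) :
    ∃ a b : List X, g = wordProd r a * (wordProd r b)⁻¹ := by
  have hg : g ∈ Subgroup.closure (Set.range (ybι r)) := by
    rw [ybι, PresentedGroup.closure_range_of]
    trivial
  induction hg using Subgroup.closure_induction with
  | mem _ hx =>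
    obtain ⟨x, rfl⟩ := hx
    exact ⟨[x], [], by simp⟩
  | one => exact ⟨[], [], by simp⟩
  | mul _ _ _ _ hg hh =>
    obtain ⟨a, b, rfl⟩ := hg
    obtain ⟨c, d, rfl⟩ := hh
    obtain ⟨c', b', hbc⟩ := exists_inv_wordProd_mul_wordProd_eq hnd b c
    refine ⟨a ++ c', d ++ b', ?_⟩
    rw [wordProd_append, wordProd_append, mul_inv_rev, mul_assoc, ← mul_assoc _ (wordProd r c),
      hbc]
    group
  | inv _ _ hg =>
    obtain ⟨a, b, rfl⟩ := hg
    exact ⟨b, a, by group⟩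

variable (r) in
def wordCocycle : List X → Multiset X
  | [] => 0
  | u :: a => u ::ₘ (wordCocycle a).map (sig r u)

@[simp] theorem wordCocycle_nil : wordCocycle r [] = 0 := rfl

@[simp] theorem wordCocycle_cons (u : X) (a : List X) :
    wordCocycle r (u :: a) = u ::ₘ (wordCocycle r a).map (sig r u) := rfl

theorem exists_wordProd_eq_cons {a : List X} {x : X} (hx : x ∈ wordCocycle r a) :
    ∃ t : List X, wordProd r a = wordProd r (x :: t) := by
  induction a generalizing x with
  | nil => simp at hx
  | cons u a ih =>
    rcases Multiset.mem_cons.1 hx with rfl | hx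
    · exact ⟨a, rfl⟩
    obtain ⟨y, hy, rfl⟩ := Multiset.mem_map.1 hx
    obtain ⟨t, ht⟩ := ih hy
    refine ⟨tau r y u :: t, ?_⟩
    rw [wordProd_cons, ht, wordProd_cons, ← mul_assoc, ybι_mul_ybι, wordProd_cons, wordProd_cons,
      mul_assoc]

section Semidirect

variable [DecidableEq X]

noncomputable def toSemidirect (hnd : Nondegenerate r) (hinv : Function.Involutive r)
    (hbr : IsBraided r) :
    YBGroup r →* (X → Multiplicative ℤ) ⋊[mulAutArrow] Equiv.Perm X :=
  PresentedGroup.toGroup (f := fun x => ⟨Pi.mulSingle x (.ofAdd 1), hnd.sigEquiv x⟩) <| by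
    rintro _ ⟨x, y, rfl⟩
    simp only [map_mul, map_inv, FreeGroup.lift_apply_of, mul_inv_eq_one]
    ext1
    · simp only [SemidirectProduct.mul_left, mulAutArrow_mulSingle,
        Nondegenerate.sigEquiv_apply, sig_sig_tau_of_involutive hinv]
      exact mul_comm _ _
    · ext z
      exact (hbr.sig_sig_tau x y z).symm

@[simp] theorem toSemidirect_ybι (hnd : Nondegenerate r) (hinv : Function.Involutive r)
    (hbr : IsBraided r) (x : X) :
    toSemidirect hnd hinv hbr (ybι r x) = ⟨Pi.mulSingle x (.ofAdd 1), hnd.sigEquiv x⟩ :=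
  PresentedGroup.toGroup.of _

theorem toSemidirect_wordProd_left (hnd : Nondegenerate r) (hinv : Function.Involutive r)
    (hbr : IsBraided r) (a : List X) :
    (toSemidirect hnd hinv hbr (wordProd r a)).left =
      fun z => .ofAdd ((wordCocycle r a).count z : ℤ) := by
  induction a with
  | nil => rfl
  | cons u a ih =>
    funext z
    obtain ⟨w, rfl⟩ := (hnd.sigEquiv u).surjective z
    rw [wordProd_cons, map_mul, SemidirectProduct.mul_left, ih, toSemidirect_ybι, Pi.mul_apply,
      mulAutArrow_apply_perm_apply]
    simp only [Nondegenerate.sigEquiv_apply, wordCocycle_cons, Pi.mulSingle_apply,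
      Multiset.count_cons, Multiset.count_map_eq_count' _ _ (hnd.1 u).1]
    split_ifs <;> simp [mul_comm]

theorem wordCocycle_eq_of_toSemidirect_eq (hnd : Nondegenerate r)
    (hinv : Function.Involutive r) (hbr : IsBraided r) {a b : List X}
    (h : toSemidirect hnd hinv hbr (wordProd r a) = toSemidirect hnd hinv hbr (wordProd r b)) :
    wordCocycle r a = wordCocycle r b := by
  have hleft := congrArg SemidirectProduct.left h
  rw [toSemidirect_wordProd_left, toSemidirect_wordProd_left] at hleft
  ext z
  simpa using congrFun hleft z

theorem wordProd_eq_of_wordCocycle_eq (hnd : Nondegenerate r) (hinv : Function.Involutive r)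
    (hbr : IsBraided r) {a b : List X} (h : wordCocycle r a = wordCocycle r b) :
    wordProd r a = wordProd r b := by
  induction b generalizing a with
  | nil =>
    cases a with
    | nil => rfl
    | cons u a => simp at h
  | cons x b ih =>
    have hx : x ∈ wordCocycle r a := h ▸ Multiset.mem_cons_self x _
    obtain ⟨t, ht⟩ := exists_wordProd_eq_cons hx
    have htb : wordCocycle r (x :: t) = wordCocycle r (x :: b) :=
      (wordCocycle_eq_of_toSemidirect_eq hnd hinv hbr (congrArg _ ht)).symm.trans h
    rw [wordCocycle_cons, wordCocycle_cons, Multiset.cons_inj_right] at htb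
    rw [ht, wordProd_cons, wordProd_cons, ih (Multiset.map_injective (hnd.1 x).1 htb)]

theorem toSemidirect_injective (hnd : Nondegenerate r) (hinv : Function.Involutive r)
    (hbr : IsBraided r) : Function.Injective (toSemidirect hnd hinv hbr) := by
  rw [injective_iff_map_eq_one]
  intro g hg
  obtain ⟨a, b, rfl⟩ := exists_eq_wordProd_mul_inv hnd g
  rw [map_mul, map_inv, mul_inv_eq_one] at hg
  rw [mul_inv_eq_one]
  exact wordProd_eq_of_wordCocycle_eq hnd hinv hbr
    (wordCocycle_eq_of_toSemidirect_eq hnd hinv hbr hg)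

end Semidirect

end YBGroup

end

theorem G_noetherian_group_general {X : Type*} [Fintype X] (r : X × X → X × X)
    (hnd : Nondegenerate r) (hinv : Function.Involutive r) (hbr : IsBraided r) :
    ∀ H : Subgroup (YBGroup r), H.FG := by
  classical
  have hℤX : Group.IsNoetherian (X → Multiplicative ℤ) :=
    .of_injective (f := (MulEquiv.funMultiplicative X ℤ).symm.toMonoidHom) .multiplicative
      (MulEquiv.injective _)
  exact Group.IsNoetherian.of_injective (.semidirectProduct hℤX .of_finite)
    (YBGroup.toSemidirect_injective hnd hinv hbr)

/-- For a finite square-free solution `(X,r)`, the group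
`G(X,r)` is Noetherian: every subgroup is finitely generated. -/
theorem G_noetherian_group {X : Type*} [Fintype X] (r : X × X → X × X)
    (hnd : Nondegenerate r) (hinv : Function.Involutive r) (hbr : IsBraided r)
    (hsf : ∀ x : X, r (x, x) = (x, x)) :
    ∀ H : Subgroup (YBGroup r), H.FG :=
  G_noetherian_group_general r hnd hinv hbr
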